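/- arXiv:1906.04672 — 2 statements merged into one kernel-verified Lean document; each statement's English description precedes it below -/
import Mathlib

section
/- For every n-tournament T, δ_T ≤ n²(n−1)(n−2)/96, and equality holds if and only if the Seidel adjacency matrix S of T satisfies S² = (1−n)·I_n (equivalently S·Sᵀ = (n−1)·I_n, i.e. S is a skew-conference matrix). -/
open Finset Matrix

variable {V : Type*} [Fintype V] [DecidableEq V]

/-- A tournament given by a dominance function: `T i j = true` means `i` dominates `j`. -/
def IsTournament (T : V → V → Bool) : Prop :=
  (∀ i, T i i = false) ∧ ∀ i j, i ≠ j → T i j = !T j i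

/-- The 0-1 adjacency matrix of a tournament. -/
def adj (T : V → V → Bool) : Matrix V V ℤ :=
  Matrix.of fun i j => if T i j then 1 else 0

/-- The Seidel adjacency matrix `S = A - Aᵀ` of a tournament. -/
def seidel (T : V → V → Bool) : Matrix V V ℤ :=
  adj T - (adj T)ᵀ

/-- Number of 3-element subsets of `W` inducing a 3-cycle (each vertex dominates
exactly one other vertex of the triple). -/
def numC3On (T : V → V → Bool) (W : Finset V) : ℕ :=
  ((W.powersetCard 3).filter fun t => ∀ v ∈ t, (t.filter fun w => T v w).card = 1).card

/-- Number of 4-element subsets of `W` inducing a diamond, i.e. containing exactly one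
3-element subset that induces a 3-cycle. -/
def numDiamondsOn (T : V → V → Bool) (W : Finset V) : ℕ :=
  ((W.powersetCard 4).filter fun s =>
    ((s.powersetCard 3).filter fun t => ∀ v ∈ t, (t.filter fun w => T v w).card = 1).card
      = 1).card

/-- `δ_T`, the number of 4-element vertex subsets inducing a diamond. -/
def numDiamonds (T : V → V → Bool) : ℕ := numDiamondsOn T Finset.univ

/-- `c₃(T)`, the number of 3-element vertex subsets inducing a 3-cycle. -/
def numC3 (T : V → V → Bool) : ℕ := numC3On T Finset.univ

/-!
Write `n = |V|`, `S = seidel T` and `Q = ∑_{i ≠ j} (S²)ᵢⱼ²`. Expanding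
`(S²)ᵢⱼ² = ∑_{k,l} S_ik S_kj S_il S_lj`, the terms with `k = l ∉ {i, j}` equal `1` and the only
other nonzero terms have `i, j, k, l` distinct, so `Q = n(n-1)(n-2) + P` with `P` the sum over
distinct quadruples. Grouped by the 4-set they span, these quadruples contribute `8` per
4-vertex subtournament, minus `32` if it is a diamond (a finite check on the `2⁶` labelled
tournaments on four vertices). Hence `96 δ_T + 3 Q = n²(n-1)(n-2)`. As `Q ≥ 0` this gives the
bound, with equality iff `S²` is diagonal; the diagonal of `S²` is always `1 - n`.
-/

section Seidel

variable {α β : Type*} {T : α → α → Bool}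

lemma seidel_apply (T : α → α → Bool) (i j : α) :
    seidel T i j = (if T i j then 1 else 0) - if T j i then 1 else 0 := rfl

@[simp]
lemma seidel_self (T : α → α → Bool) (i : α) : seidel T i i = 0 := by
  simp [seidel_apply]

lemma seidel_submatrix (T : α → α → Bool) (f : β ↪ α) :
    (seidel T).submatrix f f = seidel fun a b => T (f a) (f b) := rfl

lemma IsTournament.comap (hT : IsTournament T) (f : β ↪ α) :
    IsTournament fun a b => T (f a) (f b) :=
  ⟨fun _ => hT.1 _, fun _ _ h => hT.2 _ _ (f.injective.ne h)⟩

lemma IsTournament.seidel_mul_self (hT : IsTournament T) {i j : α} (h : i ≠ j) :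
    seidel T i j * seidel T i j = 1 := by
  have := hT.2 i j h
  cases hij : T i j <;> cases hji : T j i <;> simp_all [seidel_apply]

lemma IsTournament.seidel_mul_seidel_swap (hT : IsTournament T) {i j : α} (h : i ≠ j) :
    seidel T i j * seidel T j i = -1 := by
  have := hT.2 i j h
  cases hij : T i j <;> cases hji : T j i <;> simp_all [seidel_apply]

lemma IsTournament.seidel_sq_apply_self [Fintype α] [DecidableEq α] (hT : IsTournament T) (i : α) :
    (seidel T ^ 2) i i = 1 - Fintype.card α := by
  have hterm (k : α) : seidel T i k * seidel T k i = (if i = k then 1 else 0) - 1 := by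
    split_ifs with hk
    · simp [hk]
    · simpa using hT.seidel_mul_seidel_swap hk
  simp [sq, mul_apply, hterm, sum_sub_distrib]

lemma IsTournament.seidel_pathPair_eq [Fintype α] [DecidableEq α] (hT : IsTournament T)
    {i j : α} (hij : i ≠ j) (k l : α) :
    seidel T i k * seidel T k j * (seidel T i l * seidel T l j) =
      (if k = l ∧ k ∈ ({i, j} : Finset α)ᶜ then 1 else 0) +
        if [i, j, k, l].Nodup then seidel T i k * seidel T k j * (seidel T i l * seidel T l j)
        else 0 := by
  rcases eq_or_ne k i with rfl | hki; · simp
  rcases eq_or_ne k j with rfl | hkj; · simp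
  rcases eq_or_ne l i with rfl | hli; · simp [hki]
  rcases eq_or_ne l j with rfl | hlj; · simp [hkj]
  rcases eq_or_ne k l with rfl | hkl
  · simp [hki, hkj]
    linear_combination (seidel T k j * seidel T k j) * hT.seidel_mul_self hki.symm +
      hT.seidel_mul_self hkj
  · simp [hij, hki.symm, hkj.symm, hli.symm, hlj.symm, hkl]

lemma numC3On_map [Fintype α] [DecidableEq α] [Fintype β] [DecidableEq β]
    (T : α → α → Bool) (f : β ↪ α) (s : Finset β) :
    numC3On T (s.map f) = numC3On (fun a b => T (f a) (f b)) s := by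
  simp only [numC3On, powersetCard_map, filter_map, card_map]
  congr 1
  refine filter_congr fun t _ => ?_
  simp [filter_map, card_map]

lemma numDiamonds_eq_card_filter {α : Type*} [Fintype α] [DecidableEq α] (T : α → α → Bool) :
    numDiamonds T = #{s ∈ univ.powersetCard 4 | numC3On T s = 1} := rfl

end Seidel

def offDiagSqSum {α R : Type*} [Fintype α] [Semiring R] (M : Matrix α α R) : R :=
  ∑ p ∈ univ.offDiag, M p.1 p.2 ^ 2

section OffDiag

variable {α R : Type*} [Fintype α] [CommRing R] [LinearOrder R] [IsStrictOrderedRing R]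

lemma offDiagSqSum_nonneg (M : Matrix α α R) : 0 ≤ offDiagSqSum M :=
  sum_nonneg fun _ _ => sq_nonneg _

lemma offDiagSqSum_eq_zero_iff {M : Matrix α α R} : offDiagSqSum M = 0 ↔ M.IsDiag := by
  rw [offDiagSqSum, sum_eq_zero_iff_of_nonneg fun _ _ => sq_nonneg _]
  simp [Matrix.IsDiag, Pairwise]

end OffDiag

lemma IsTournament.seidel_sq_eq_smul_one_iff {α : Type*} [Fintype α] [DecidableEq α]
    {T : α → α → Bool} (hT : IsTournament T) :
    seidel T ^ 2 = ((1 : ℤ) - Fintype.card α) • (1 : Matrix α α ℤ) ↔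
      offDiagSqSum (seidel T ^ 2) = 0 := by
  rw [offDiagSqSum_eq_zero_iff]
  refine ⟨fun h => h ▸ (isDiag_one.smul _), fun h => ?_⟩
  ext i j
  obtain rfl | hij := eq_or_ne i j
  · simp [hT.seidel_sq_apply_self]
  · simp [h hij, one_apply_ne hij]

section PathPairSum

variable {α β R : Type*} [DecidableEq α] [DecidableEq β] [Semiring R]

def pathPairSum (M : Matrix α α R) (s : Finset α) : R :=
  ∑ a ∈ s, ∑ b ∈ s, ∑ c ∈ s, ∑ d ∈ s,
    if [a, b, c, d].Nodup then M a c * M c b * (M a d * M d b) else 0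

lemma pathPairSum_map (M : Matrix α α R) (f : β ↪ α) (s : Finset β) :
    pathPairSum M (s.map f) = pathPairSum (M.submatrix f f) s := by
  have hnodup (a b c d : β) : [f a, f b, f c, f d].Nodup ↔ [a, b, c, d].Nodup :=
    List.nodup_map_iff (l := [a, b, c, d]) f.injective
  simp only [pathPairSum, sum_map, hnodup, submatrix_apply]

lemma pathPairSum_eq_sum_powersetCard [Fintype α] (M : Matrix α α R) :
    pathPairSum M univ = ∑ s ∈ univ.powersetCard 4, pathPairSum M s := by
  let vertices (q : α × α × α × α) : List α := [q.1, q.2.1, q.2.2.1, q.2.2.2]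
  let g (q : α × α × α × α) : R := if (vertices q).Nodup then
    M q.1 q.2.2.1 * M q.2.2.1 q.2.1 * (M q.1 q.2.2.2 * M q.2.2.2 q.2.1) else 0
  have hprod (s : Finset α) : pathPairSum M s = ∑ q ∈ s ×ˢ s ×ˢ s ×ˢ s, g q := by
    simp only [pathPairSum, sum_product, g, vertices]
  have hmem (s : Finset α) (q : α × α × α × α) :
      q ∈ s ×ˢ s ×ˢ s ×ˢ s ↔ (vertices q).toFinset ⊆ s := by
    simp [vertices, mem_product, insert_subset_iff]
  -- each quadruple of distinct vertices lies in exactly one 4-set, namely its set of vertices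
  have hfiber (q : α × α × α × α) :
      ∑ s ∈ univ.powersetCard 4, (if (vertices q).toFinset ⊆ s then g q else 0) = g q := by
    by_cases hq : (vertices q).Nodup
    · have hcard : (vertices q).toFinset.card = 4 := List.toFinset_card_of_nodup hq
      rw [sum_eq_single_of_mem _ (mem_powersetCard_univ.2 hcard), if_pos subset_rfl]
      intro s hs hne
      rw [if_neg fun hsub => hne (eq_of_subset_of_card_le hsub
        ((mem_powersetCard_univ.1 hs).trans hcard.symm).le).symm]
    · simp [g, hq]
  calc pathPairSum M univ = ∑ q, g q := by rw [hprod, univ_product_univ, univ_product_univ,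
        univ_product_univ]
    _ = ∑ q, ∑ s ∈ univ.powersetCard 4, if q ∈ s ×ˢ s ×ˢ s ×ˢ s then g q else 0 := by
      simp only [hmem, hfiber]
    _ = ∑ s ∈ univ.powersetCard 4, pathPairSum M s := by
      rw [sum_comm]
      simp only [sum_ite_mem, univ_inter, hprod]

end PathPairSum

def fourTournament (x01 x02 x03 x12 x13 x23 : Bool) : Fin 4 → Fin 4 → Bool :=
  ![![false, x01, x02, x03], ![!x01, false, x12, x13],
    ![!x02, !x12, false, x23], ![!x03, !x13, !x23, false]]

lemma IsTournament.eq_fourTournament {b : Fin 4 → Fin 4 → Bool} (hb : IsTournament b) :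
    b = fourTournament (b 0 1) (b 0 2) (b 0 3) (b 1 2) (b 1 3) (b 2 3) := by
  funext i j
  fin_cases i <;> fin_cases j <;> simp [fourTournament, hb.1] <;> exact hb.2 _ _ (by decide)

lemma pathPairSum_seidel_fourTournament : ∀ x01 x02 x03 x12 x13 x23 : Bool,
    pathPairSum (seidel (fourTournament x01 x02 x03 x12 x13 x23)) univ =
      8 - 32 * if numC3 (fourTournament x01 x02 x03 x12 x13 x23) = 1 then 1 else 0 := by
  decide

lemma IsTournament.pathPairSum_seidel_of_card_eq_four {α : Type*} [Fintype α] [DecidableEq α]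
    {T : α → α → Bool} (hT : IsTournament T) {s : Finset α} (hs : #s = 4) :
    pathPairSum (seidel T) s = 8 - 32 * if numC3On T s = 1 then 1 else 0 := by
  obtain ⟨f, rfl⟩ :=
    Function.Embedding.exists_of_card_eq_finset (α := Fin 4) (s := s) (by simp [hs])
  rw [pathPairSum_map, numC3On_map, seidel_submatrix, (hT.comap f).eq_fourTournament]
  exact pathPairSum_seidel_fourTournament ..

lemma IsTournament.offDiagSqSum_seidel_sq {α : Type*} [Fintype α] [DecidableEq α]
    {T : α → α → Bool} (hT : IsTournament T) :
    offDiagSqSum (seidel T ^ 2) = Fintype.card α * (Fintype.card α - 1) * (Fintype.card α - 2) +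
      pathPairSum (seidel T) univ := by
  have hcompl {i j : α} (hij : i ≠ j) : (#({i, j} : Finset α)ᶜ : ℤ) = Fintype.card α - 2 := by
    have := card_add_card_compl ({i, j} : Finset α)
    rw [card_pair hij] at this
    omega
  have hentry {p : α × α} (hp : p ∈ univ.offDiag) : (seidel T ^ 2) p.1 p.2 ^ 2 =
      (Fintype.card α - 2) + ∑ k, ∑ l, if [p.1, p.2, k, l].Nodup then
        seidel T p.1 k * seidel T k p.2 * (seidel T p.1 l * seidel T l p.2) else 0 := by
    have hp : p.1 ≠ p.2 := (mem_offDiag.1 hp).2.2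
    rw [sq (seidel T), mul_apply, sq, sum_mul_sum]
    rw [sum_congr rfl fun k _ => sum_congr rfl fun l _ => hT.seidel_pathPair_eq hp k l]
    simp only [sum_add_distrib, ite_and, sum_ite_eq, mem_univ, if_true, Fintype.sum_ite_mem,
      sum_const, nsmul_one, hcompl hp]
  rw [offDiagSqSum, sum_congr rfl fun p hp => hentry hp, sum_add_distrib, sum_const, offDiag_card,
    sum_subset (subset_univ _), Fintype.sum_prod_type]
  · rw [card_univ, nsmul_eq_mul, Nat.cast_sub (Nat.le_mul_self _), pathPairSum]
    push_cast
    ring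
  · intro p _ hp
    simp_all [mem_offDiag]

lemma twentyFour_mul_choose_four (n : ℕ) :
    24 * (n.choose 4 : ℤ) = n * (n - 1) * (n - 2) * (n - 3) := by
  obtain h | ⟨m, rfl⟩ : n < 3 ∨ ∃ m, n = m + 3 :=
    (lt_or_ge n 3).imp_right fun h => ⟨n - 3, by omega⟩
  · interval_cases n <;> rfl
  · rw [← Nat.cast_ofNat (R := ℤ) (n := 24), ← Nat.cast_mul, show 24 = (4).factorial from rfl,
      ← Nat.descFactorial_eq_factorial_mul_choose, Nat.cast_descFactorial]
    simp [ascPochhammer_succ_eval]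
    ring

lemma IsTournament.ninetySix_mul_numDiamonds_add_three_mul_offDiagSqSum {α : Type*} [Fintype α]
    [DecidableEq α] {T : α → α → Bool} (hT : IsTournament T) :
    96 * (numDiamonds T : ℤ) + 3 * offDiagSqSum (seidel T ^ 2) =
      Fintype.card α ^ 2 * (Fintype.card α - 1) * (Fintype.card α - 2) := by
  have hpaths : pathPairSum (seidel T) univ =
      8 * (Fintype.card α).choose 4 - 32 * numDiamonds T := by
    rw [pathPairSum_eq_sum_powersetCard, sum_congr rfl fun s hs =>
      hT.pathPairSum_seidel_of_card_eq_four (mem_powersetCard_univ.1 hs), sum_sub_distrib,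
      sum_const, ← mul_sum, sum_boole, card_powersetCard, card_univ, nsmul_eq_mul,
      numDiamonds_eq_card_filter, mul_comm]
  rw [hT.offDiagSqSum_seidel_sq, hpaths]
  linear_combination twentyFour_mul_choose_four (Fintype.card α)

/-- `δ_T ≤ n²(n−1)(n−2)/96`, with equality iff `S² = (1−n)·I_n`
(equivalently, `S` is a skew-conference matrix). -/
theorem stmt_9 {n : ℕ} (T : Fin n → Fin n → Bool) (hT : IsTournament T) :
    (numDiamonds T : ℚ) ≤ (n : ℚ)^2 * ((n : ℚ) - 1) * ((n : ℚ) - 2) / 96 ∧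
      ((numDiamonds T : ℚ) = (n : ℚ)^2 * ((n : ℚ) - 1) * ((n : ℚ) - 2) / 96 ↔
        seidel T ^ 2 = ((1 : ℤ) - (n : ℤ)) • (1 : Matrix (Fin n) (Fin n) ℤ)) := by
  have hid : 96 * (numDiamonds T : ℚ) + 3 * (offDiagSqSum (seidel T ^ 2) : ℤ) =
      (n : ℚ) ^ 2 * ((n : ℚ) - 1) * ((n : ℚ) - 2) := by
    exact_mod_cast Fintype.card_fin n ▸ hT.ninetySix_mul_numDiamonds_add_three_mul_offDiagSqSum
  have hnonneg : (0 : ℚ) ≤ (offDiagSqSum (seidel T ^ 2) : ℤ) := by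
    exact_mod_cast offDiagSqSum_nonneg _
  have hiff := hT.seidel_sq_eq_smul_one_iff
  rw [Fintype.card_fin] at hiff
  rw [le_div_iff₀ (by norm_num), eq_div_iff (by norm_num), hiff]
  refine ⟨by linarith, fun h => ?_, fun h => ?_⟩
  · exact_mod_cast (by linarith : ((offDiagSqSum (seidel T ^ 2) : ℤ) : ℚ) = 0)
  · rw [h, Int.cast_zero] at hid
    linarith
end

section
/- Let q be a prime power with q ≡ 3 (mod 4), and let T*(q) be the tournament on the q+1 vertices F_q ∪ {∞} in which, for x, y ∈ F_q, x dominates y iff y − x is a nonzero square in F_q, and ∞ dominates every element of F_q. Then the Seidel adjacency matrix S of T*(q) satisfies S·Sᵀ = q·I_{q+1} (it is a skew-conference matrix), and consequently δ_{T*(q)} = n²(n−1)(n−2)/96 where n = q+1. -/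
open Finset Matrix

variable {V : Type*} [Fintype V] [DecidableEq V]

/-!
Write `χ` for the quadratic character of `F` and `n = q + 1`. On `F` the Seidel matrix of
`T*(q)` is `(χ (y - x))`, with `1` in the row of `∞` and `-1` in its column. Since `χ (-1) = -1`,
the orthogonality of its rows reduces to `∑ z, χ (z - x) χ (z - y) = -1` for `x ≠ y`, which is the
Jacobi sum `J(χ, χ) = -χ (-1)`.

The count of diamonds holds for every tournament with `S Sᵀ = (n - 1) I`. The row sums of `S` are
`2 s_v - (n - 1)` with `s_v` the out-degrees; they sum to `0` and their squares sum to `n (n - 1)`,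
so Moon's formula `c₃ = C(n, 3) - ∑ C(s_v, 2)` gives `24 c₃ = n (n - 1) (n - 2)`. A diamond
contains exactly one cyclic triple `t`, and `t ∪ {v}` is a diamond iff `v` dominates or is
dominated by all of `t`. The square `(S_va + S_vb + S_vc)²` is `9` for such `v`, `1` for the other
`v ∉ t` and `0` on `t`, and by orthogonality its sum over `v` is `3 (n - 1)`; so exactly `n / 4`
vertices extend `t`, and `4 δ = n c₃`.
-/

theorem Finset.powersetCard_eq_image_erase {β : Type*} [DecidableEq β] {s : Finset β} {k : ℕ}
    (hs : #s = k + 1) : s.powersetCard k = s.image s.erase := by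
  ext u
  simp only [mem_powersetCard, mem_image]
  constructor
  · rintro ⟨hus, huk⟩
    obtain ⟨a, ha, rfl⟩ := exists_eq_insert_iff.mpr ⟨hus, by omega⟩
    exact ⟨a, mem_insert_self a u, erase_insert ha⟩
  · rintro ⟨a, ha, rfl⟩
    exact ⟨erase_subset a s, by rw [card_erase_of_mem ha, hs, Nat.add_sub_cancel]⟩

theorem Finset.card_filter_powersetCard_eq {β : Type*} [DecidableEq β] {s : Finset β} {k : ℕ}
    (hs : #s = k + 1) (p : Finset β → Prop) [DecidablePred p] :
    #{u ∈ s.powersetCard k | p u} = #{x ∈ s | p (s.erase x)} := by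
  rw [powersetCard_eq_image_erase hs, filter_image,
    card_image_of_injOn (s.erase_injOn.mono (filter_subset _ _))]

theorem Nat.cast_choose_three {K : Type*} [Field K] [CharZero K] (n : ℕ) :
    (n.choose 3 : K) = n * (n - 1) * (n - 2) / 6 := by
  rcases n with _ | _ | n
  · simp
  · norm_num [Nat.choose]
  · have h := congrArg (Nat.cast : ℕ → K) (Nat.descFactorial_eq_factorial_mul_choose (n + 1 + 1) 3)
    simp only [Nat.descFactorial, Nat.factorial] at h
    push_cast at h ⊢
    linear_combination -h / 6

theorem sum_mul_sub_one_of_sum_sq {ι : Type*} [Fintype ι] (x : ι → ℚ) (n : ℚ)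
    (hn : Fintype.card ι = n) (h1 : ∑ i, (2 * x i - (n - 1)) = 0)
    (h2 : ∑ i, (2 * x i - (n - 1)) ^ 2 = n * (n - 1)) :
    ∑ i, x i * (x i - 1) = n * (n - 1) * (n - 2) / 4 :=
  calc ∑ i, x i * (x i - 1)
      = ∑ i, ((2 * x i - (n - 1)) ^ 2 + 2 * (n - 2) * (2 * x i - (n - 1))
          + (n - 1) * (n - 3)) / 4 := sum_congr rfl fun i _ => by ring
    _ = (∑ i, (2 * x i - (n - 1)) ^ 2 + 2 * (n - 2) * ∑ i, (2 * x i - (n - 1))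
          + Fintype.card ι * ((n - 1) * (n - 3))) / 4 := by
      rw [← sum_div, sum_add_distrib, sum_add_distrib, ← mul_sum, sum_const, card_univ,
        nsmul_eq_mul]
    _ = n * (n - 1) * (n - 2) / 4 := by
      rw [h1, h2, hn]
      ring

section Tournament

variable {α : Type*} {T : α → α → Bool}

-- An `abbrev`, so that the decidability instance agrees with the one inlined in `numC3On`.
abbrev IsCyclicTriple [DecidableEq α] (T : α → α → Bool) (t : Finset α) : Prop :=
  ∀ v ∈ t, #{w ∈ t | T v w} = 1

theorem seidel_transpose (T : α → α → Bool) : (seidel T)ᵀ = -seidel T := by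
  rw [seidel, transpose_sub, transpose_transpose, neg_sub]

theorem seidel_apply_self (T : α → α → Bool) (v : α) : seidel T v v = 0 := by
  simp [seidel, adj]

theorem seidel_apply_swap (T : α → α → Bool) (v w : α) : seidel T w v = -seidel T v w := by
  simp [seidel, adj]

theorem sum_sum_seidel_eq_zero [Fintype α] (T : α → α → Bool) : ∑ v, ∑ w, seidel T v w = 0 := by
  have h := congrArg (fun M : Matrix α α ℤ => ∑ v, ∑ w, M v w) (seidel_transpose T)
  simp only [transpose_apply, neg_apply, sum_neg_distrib] at h
  rw [sum_comm] at h
  linarith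

namespace IsTournament

theorem apply_self (hT : IsTournament T) (v : α) : T v v = false := hT.1 v

theorem apply_swap (hT : IsTournament T) {v w : α} (h : v ≠ w) : T w v = !T v w := by
  rw [hT.2 v w h, Bool.not_not]

theorem seidel_apply_of_ne (hT : IsTournament T) {v w : α} (h : v ≠ w) :
    seidel T v w = if T v w then 1 else -1 := by
  simp only [seidel, adj, Matrix.sub_apply, transpose_apply, of_apply, hT.apply_swap h]
  cases T v w <;> rfl

theorem isCyclicTriple_iff [DecidableEq α] (hT : IsTournament T) {a b c : α} (hab : a ≠ b)
    (hac : a ≠ c) (hbc : b ≠ c) : IsCyclicTriple T {a, b, c} ↔ T a b = T b c ∧ T b c = T c a := by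
  simp only [IsCyclicTriple, forall_mem_insert, mem_singleton, forall_eq, card_filter,
    sum_insert (show a ∉ ({b, c} : Finset α) by simp [hab, hac]),
    sum_insert (show b ∉ ({c} : Finset α) by simp [hbc]), sum_singleton, hT.apply_self,
    hT.apply_swap hab, hT.apply_swap hac, hT.apply_swap hbc]
  cases T a b <;> cases T b c <;> cases T a c <;> decide

theorem card_sources_of_card_eq_three [DecidableEq α] (hT : IsTournament T) {t : Finset α}
    (ht : #t = 3) :
    #{v ∈ t | ∀ w ∈ t, w ≠ v → T v w} = if IsCyclicTriple T t then 0 else 1 := by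
  obtain ⟨a, b, c, hab, hac, hbc, rfl⟩ := card_eq_three.mp ht
  simp only [hT.isCyclicTriple_iff hab hac hbc]
  simp only [card_filter, forall_mem_insert, mem_singleton, forall_eq,
    sum_insert (show a ∉ ({b, c} : Finset α) by simp [hab, hac]),
    sum_insert (show b ∉ ({c} : Finset α) by simp [hbc]), sum_singleton, hT.apply_self,
    hT.apply_swap hab, hT.apply_swap hac, hT.apply_swap hbc, ne_eq, hab, hac, hbc,
    hab.symm, hac.symm, hbc.symm, not_false_eq_true, not_true_eq_false, forall_const,
    false_implies, true_and, and_true]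
  cases T a b <;> cases T b c <;> cases T a c <;> decide

theorem sq_seidel_add_seidel_add_seidel [DecidableEq α] (hT : IsTournament T) {a b c : α}
    (hab : a ≠ b) (hac : a ≠ c) (hbc : b ≠ c) (hcyc : T a b = T b c ∧ T b c = T c a) (v : α) :
    (seidel T v a + seidel T v b + seidel T v c) ^ 2 =
      8 * (if v ∉ ({a, b, c} : Finset α) ∧ T v a = T v b ∧ T v b = T v c then 1 else 0)
        + if v ∉ ({a, b, c} : Finset α) then 1 else 0 := by
  revert hcyc
  by_cases hva : v = a
  · subst hva
    simp only [seidel_apply_self, hT.seidel_apply_of_ne hab, hT.seidel_apply_of_ne hac,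
      hT.apply_swap hac, mem_insert_self, not_true_eq_false, false_and, if_false]
    cases T v b <;> cases T b c <;> cases T v c <;> decide
  by_cases hvb : v = b
  · subst hvb
    simp only [seidel_apply_self, hT.seidel_apply_of_ne (Ne.symm hab), hT.seidel_apply_of_ne hbc,
      hT.apply_swap hab, mem_insert_self, mem_insert_of_mem, not_true_eq_false, false_and, if_false]
    cases T a v <;> cases T v c <;> cases T c a <;> decide
  by_cases hvc : v = c
  · subst hvc
    simp only [seidel_apply_self, hT.seidel_apply_of_ne (Ne.symm hac),
      hT.seidel_apply_of_ne (Ne.symm hbc), hT.apply_swap hbc, mem_insert, mem_singleton,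
      or_true, not_true_eq_false, false_and, if_false]
    cases T a b <;> cases T b v <;> cases T v a <;> decide
  have hv : v ∉ ({a, b, c} : Finset α) := by simp [hva, hvb, hvc]
  simp only [hT.seidel_apply_of_ne hva, hT.seidel_apply_of_ne hvb, hT.seidel_apply_of_ne hvc, hv,
    not_false_eq_true, true_and, if_true]
  cases T v a <;> cases T v b <;> cases T v c <;> simp

end IsTournament

end Tournament

section Counting

variable {α : Type*} [Fintype α] [DecidableEq α] {T : α → α → Bool}

def outNbhd (T : α → α → Bool) (v : α) : Finset α := {w | T v w}

theorem IsTournament.sum_seidel_row (hT : IsTournament T) (v : α) :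
    ∑ w, seidel T v w = 2 * #(outNbhd T v) - (Fintype.card α - 1) := by
  have h : ∀ w, seidel T v w = 2 * (if T v w then 1 else 0) - (1 - if v = w then 1 else 0) := by
    intro w
    by_cases hvw : v = w
    · subst hvw
      simp [seidel, adj, hT.apply_self]
    · rw [hT.seidel_apply_of_ne hvw]
      cases T v w <;> simp [hvw]
  rw [sum_congr rfl fun w _ => h w, sum_sub_distrib, sum_sub_distrib, sum_ite_eq, ← mul_sum,
    sum_boole]
  simp [outNbhd, card_univ]

theorem sum_seidel_mul_seidel (hS : seidel T * (seidel T)ᵀ = ((Fintype.card α : ℤ) - 1) • 1)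
    (x y : α) :
    ∑ v, seidel T x v * seidel T y v = if x = y then (Fintype.card α : ℤ) - 1 else 0 := by
  simpa only [mul_apply, transpose_apply, Matrix.smul_apply, one_apply, smul_eq_mul, mul_ite,
    mul_one, mul_zero] using congrFun (congrFun hS x) y

theorem sum_sq_sum_seidel (hS : seidel T * (seidel T)ᵀ = ((Fintype.card α : ℤ) - 1) • 1) :
    ∑ v, (∑ w, seidel T v w) ^ 2 = Fintype.card α * (Fintype.card α - 1) := by
  calc ∑ v, (∑ w, seidel T v w) ^ 2 = ∑ w, ∑ w', ∑ v, seidel T w v * seidel T w' v := by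
        simp only [sq, sum_mul_sum]
        rw [sum_comm]
        refine sum_congr rfl fun w _ => ?_
        rw [sum_comm]
        refine sum_congr rfl fun w' _ => sum_congr rfl fun v _ => ?_
        rw [seidel_apply_swap T w v, seidel_apply_swap T w' v, neg_mul_neg]
    _ = _ := by
        simp [sum_seidel_mul_seidel hS, card_univ]
        ring

theorem IsTournament.card_sourced_triples (hT : IsTournament T) (v : α) :
    #{t ∈ univ.powersetCard 3 | v ∈ t ∧ ∀ w ∈ t, w ≠ v → T v w} = (#(outNbhd T v)).choose 2 := by
  have hv : v ∉ outNbhd T v := by simp [outNbhd, hT.apply_self]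
  rw [← card_powersetCard]
  refine card_nbij' (·.erase v) (insert v) (fun t ht => ?_) (fun p hp => ?_) (fun t ht => ?_)
    (fun p hp => ?_)
  · simp only [mem_coe, mem_filter, mem_powersetCard] at ht ⊢
    refine ⟨fun w hw => ?_, by rw [card_erase_of_mem ht.2.1, ht.1.2]⟩
    obtain ⟨hwv, hwt⟩ := mem_erase.mp hw
    simpa [outNbhd] using ht.2.2 w hwt hwv
  · simp only [mem_coe, mem_filter, mem_powersetCard] at hp ⊢
    have hvp : v ∉ p := fun h => hv (hp.1 h)
    refine ⟨⟨subset_univ _, by rw [card_insert_of_notMem hvp, hp.2]⟩, mem_insert_self v p,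
      fun w hw hwv => ?_⟩
    simpa [outNbhd] using hp.1 ((mem_insert.mp hw).resolve_left hwv)
  · simp only [mem_coe, mem_filter] at ht
    exact insert_erase ht.2.1
  · simp only [mem_coe, mem_powersetCard] at hp
    exact erase_insert fun h => hv (hp.1 h)

theorem IsTournament.numC3_add_sum_choose (hT : IsTournament T) :
    numC3 T + ∑ v, (#(outNbhd T v)).choose 2 = (Fintype.card α).choose 3 := by
  have hsrc := sum_card_bipartiteAbove_eq_sum_card_bipartiteBelow (s := univ)
    (t := univ.powersetCard 3) (r := fun v t => v ∈ t ∧ ∀ w ∈ t, w ≠ v → T v w)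
  simp only [bipartiteAbove, bipartiteBelow, hT.card_sourced_triples] at hsrc
  simp only [← filter_filter, filter_mem_eq_inter, univ_inter] at hsrc
  rw [hsrc, sum_congr rfl (g := fun t => if IsCyclicTriple T t then 0 else 1) fun t ht => by
    convert hT.card_sources_of_card_eq_three (mem_powersetCard.mp ht).2]
  rw [sum_ite, sum_const_zero, sum_const, smul_eq_mul, mul_one, zero_add, numC3, numC3On,
    card_filter_add_card_filter_not, card_powersetCard, card_univ]

theorem IsTournament.twentyFour_mul_numC3 (hT : IsTournament T)
    (hS : seidel T * (seidel T)ᵀ = ((Fintype.card α : ℤ) - 1) • 1) :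
    24 * (numC3 T : ℚ) = Fintype.card α * (Fintype.card α - 1) * (Fintype.card α - 2) := by
  have hmoon := congrArg (Nat.cast : ℕ → ℚ) hT.numC3_add_sum_choose
  push_cast [Nat.cast_choose_two, Nat.cast_choose_three] at hmoon
  have hrow (v : α) := congrArg (Int.cast : ℤ → ℚ) (hT.sum_seidel_row v)
  push_cast at hrow
  have hr := congrArg (Int.cast : ℤ → ℚ) (sum_sum_seidel_eq_zero T)
  have hr2 := congrArg (Int.cast : ℤ → ℚ) (sum_sq_sum_seidel hS)
  push_cast [hrow] at hr hr2
  rw [← sum_div, sum_mul_sub_one_of_sum_sq _ _ rfl hr hr2] at hmoon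
  linear_combination 24 * hmoon

theorem IsTournament.four_mul_card_apexes (hT : IsTournament T)
    (hS : seidel T * (seidel T)ᵀ = ((Fintype.card α : ℤ) - 1) • 1) {a b c : α}
    (hab : a ≠ b) (hac : a ≠ c) (hbc : b ≠ c) (hcyc : T a b = T b c ∧ T b c = T c a) :
    4 * #{v | v ∉ ({a, b, c} : Finset α) ∧ T v a = T v b ∧ T v b = T v c} = Fintype.card α := by
  have hsum : ∑ v, (seidel T v a + seidel T v b + seidel T v c) ^ 2
      = 3 * ((Fintype.card α : ℤ) - 1) := by
    have hexp (v : α) : (seidel T v a + seidel T v b + seidel T v c) ^ 2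
        = seidel T a v * seidel T a v + seidel T b v * seidel T b v
          + seidel T c v * seidel T c v + 2 * (seidel T a v * seidel T b v)
          + 2 * (seidel T a v * seidel T c v) + 2 * (seidel T b v * seidel T c v) := by
      rw [seidel_apply_swap T a v, seidel_apply_swap T b v, seidel_apply_swap T c v]
      ring
    simp only [hexp, sum_add_distrib, ← mul_sum, sum_seidel_mul_seidel hS, hab, hac, hbc,
      if_true, if_false]
    ring
  have ht : #({a, b, c} : Finset α) = 3 := card_eq_three.mpr ⟨a, b, c, hab, hac, hbc, rfl⟩
  have h3 : 3 ≤ Fintype.card α := ht ▸ card_le_univ _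
  rw [sum_congr rfl fun v _ => hT.sq_seidel_add_seidel_add_seidel hab hac hbc hcyc v,
    sum_add_distrib, ← mul_sum, sum_boole, sum_boole, filter_notMem_eq_sdiff,
    ← compl_eq_univ_sdiff, card_compl, ht] at hsum
  push_cast [Nat.cast_sub h3] at hsum
  omega

theorem IsTournament.card_cyclic_insert_eq_one_iff (hT : IsTournament T) {a b c v : α}
    (hab : a ≠ b) (hac : a ≠ c) (hbc : b ≠ c) (hva : v ≠ a) (hvb : v ≠ b) (hvc : v ≠ c)
    (hcyc : T a b = T b c ∧ T b c = T c a) :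
    #{u ∈ (insert v {a, b, c} : Finset α).powersetCard 3 | IsCyclicTriple T u} = 1 ↔
      T v a = T v b ∧ T v b = T v c := by
  have hv : v ∉ ({a, b, c} : Finset α) := by simp [hva, hvb, hvc]
  have ha : a ∉ ({b, c} : Finset α) := by simp [hab, hac]
  have hb : b ∉ ({c} : Finset α) := by simp [hbc]
  rw [card_filter_powersetCard_eq (by rw [card_insert_of_notMem hv, card_insert_of_notMem ha,
    card_insert_of_notMem hb, card_singleton]), card_filter, sum_insert hv, sum_insert ha,
    sum_insert hb, sum_singleton]
  simp only [erase_insert hv, erase_insert_of_ne hva, erase_insert_of_ne hvb,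
    erase_insert_of_ne hvc, erase_insert ha, erase_insert_of_ne hab, erase_insert_of_ne hac,
    erase_insert hb, erase_insert_of_ne hbc, erase_singleton,
    insert_empty, hT.isCyclicTriple_iff hab hac hbc, hT.isCyclicTriple_iff hvb hvc hbc,
    hT.isCyclicTriple_iff hva hvc hac, hT.isCyclicTriple_iff hva hvb hab,
    hT.apply_swap hvb, hT.apply_swap hvc, hT.apply_swap hac.symm]
  revert hcyc
  cases T v a <;> cases T v b <;> cases T v c <;> cases T a b <;> cases T b c <;> cases T c a <;>
    decide

def cyclicTriples (T : α → α → Bool) : Finset (Finset α) :=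
  {t ∈ univ.powersetCard 3 | IsCyclicTriple T t}

def diamonds (T : α → α → Bool) : Finset (Finset α) :=
  {s ∈ univ.powersetCard 4 | #{t ∈ s.powersetCard 3 | IsCyclicTriple T t} = 1}

theorem IsTournament.card_diamonds_supset_eq_card_apexes (hT : IsTournament T) {a b c : α}
    (hab : a ≠ b) (hac : a ≠ c) (hbc : b ≠ c) (hcyc : T a b = T b c ∧ T b c = T c a) :
    #{s ∈ diamonds T | {a, b, c} ⊆ s} =
      #{v | v ∉ ({a, b, c} : Finset α) ∧ T v a = T v b ∧ T v b = T v c} := by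
  have ht : #({a, b, c} : Finset α) = 3 := card_eq_three.mpr ⟨a, b, c, hab, hac, hbc, rfl⟩
  have hext {v : α} (hv : v ∉ ({a, b, c} : Finset α)) := by
    simp only [mem_insert, mem_singleton, not_or] at hv
    exact hT.card_cyclic_insert_eq_one_iff hab hac hbc hv.1 hv.2.1 hv.2.2 hcyc
  symm
  refine card_bij (fun v _ => insert v {a, b, c}) (fun v hv => ?_) (fun v hv w _ h => ?_)
    (fun s hs => ?_)
  · obtain ⟨hvt, huni⟩ := (mem_filter.mp hv).2
    simp only [diamonds, mem_filter, mem_powersetCard, subset_univ, true_and]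
    exact ⟨⟨by rw [card_insert_of_notMem hvt, ht], (hext hvt).mpr huni⟩, subset_insert v _⟩
  · exact (insert_inj (mem_filter.mp hv).2.1).mp h
  · simp only [diamonds, mem_filter, mem_powersetCard, subset_univ, true_and] at hs
    obtain ⟨v, hvt, rfl⟩ := exists_eq_insert_iff.mpr ⟨hs.2, by rw [ht, hs.1.1]⟩
    exact ⟨v, mem_filter.mpr ⟨mem_univ v, hvt, (hext hvt).mp hs.1.2⟩, rfl⟩

theorem IsTournament.four_mul_numDiamonds (hT : IsTournament T)
    (hS : seidel T * (seidel T)ᵀ = ((Fintype.card α : ℤ) - 1) • 1) :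
    4 * numDiamonds T = Fintype.card α * numC3 T := by
  have hdc := sum_card_bipartiteAbove_eq_sum_card_bipartiteBelow (s := cyclicTriples T)
    (t := diamonds T) (r := (· ⊆ ·))
  have hbelow : ∀ s ∈ diamonds T, #((cyclicTriples T).bipartiteBelow (· ⊆ ·) s) = 1 := by
    intro s hs
    convert (mem_filter.mp hs).2 using 2
    ext t
    simp only [bipartiteBelow, cyclicTriples, mem_filter, mem_powersetCard, subset_univ,
      true_and]
    tauto
  have habove : ∀ t ∈ cyclicTriples T,
      4 * #((diamonds T).bipartiteAbove (· ⊆ ·) t) = Fintype.card α := by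
    intro t ht
    simp only [cyclicTriples, mem_filter, mem_powersetCard, subset_univ, true_and] at ht
    obtain ⟨a, b, c, hab, hac, hbc, rfl⟩ := card_eq_three.mp ht.1
    rw [hT.isCyclicTriple_iff hab hac hbc] at ht
    rw [bipartiteAbove, hT.card_diamonds_supset_eq_card_apexes hab hac hbc ht.2,
      hT.four_mul_card_apexes hS hab hac hbc ht.2]
  calc 4 * numDiamonds T = 4 * ∑ s ∈ diamonds T, #((cyclicTriples T).bipartiteBelow (· ⊆ ·) s) := by
        rw [sum_congr rfl hbelow, ← card_eq_sum_ones]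
        rfl
    _ = ∑ t ∈ cyclicTriples T, 4 * #((diamonds T).bipartiteAbove (· ⊆ ·) t) := by
        rw [← hdc, mul_sum]
    _ = Fintype.card α * numC3 T := by
        rw [sum_congr rfl habove, sum_const, smul_eq_mul, mul_comm]
        rfl

end Counting

section PaleyExtension

variable {F : Type*} [Field F]

structure IsPaleyExtension (T : Option F → Option F → Bool) : Prop where
  none_some (x : F) : T none (some x) = true
  some_none (x : F) : T (some x) none = false
  none_none : T none none = false
  some_self (x : F) : T (some x) (some x) = false
  some_some {x y : F} (h : x ≠ y) : T (some x) (some y) = true ↔ IsSquare (y - x)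

namespace IsPaleyExtension

variable {T : Option F → Option F → Bool}

theorem seidel_none_some (hP : IsPaleyExtension T) (x : F) : seidel T none (some x) = 1 := by
  simp [seidel, adj, hP.none_some, hP.some_none]

theorem seidel_some_none (hP : IsPaleyExtension T) (x : F) : seidel T (some x) none = -1 := by
  simp [seidel, adj, hP.none_some, hP.some_none]

end IsPaleyExtension

end PaleyExtension

section Paley

variable {F : Type*} [Field F] [Fintype F]

theorem ringChar_ne_two_of_card_mod_four (hq : Fintype.card F % 4 = 3) : ringChar F ≠ 2 :=
  fun h => by have := FiniteField.even_card_of_char_two h; omega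

variable [DecidableEq F]

theorem quadraticChar_neg_one_of_card_mod_four (hq : Fintype.card F % 4 = 3) :
    quadraticChar F (-1) = -1 :=
  quadraticChar_neg_one_iff_not_isSquare.mpr
    fun h => FiniteField.isSquare_neg_one_iff.mp h hq

theorem isSquare_neg_iff_of_card_mod_four (hq : Fintype.card F % 4 = 3) {a : F} (ha : a ≠ 0) :
    IsSquare (-a) ↔ ¬IsSquare a := by
  rw [← quadraticChar_one_iff_isSquare (neg_ne_zero.mpr ha),
    ← quadraticChar_neg_one_iff_not_isSquare, neg_eq_neg_one_mul, map_mul,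
    quadraticChar_neg_one_of_card_mod_four hq, neg_one_mul, neg_eq_iff_eq_neg]

theorem sum_quadraticChar_sub (hF : ringChar F ≠ 2) (y : F) :
    ∑ z, quadraticChar F (z - y) = 0 :=
  ((Equiv.subRight y).sum_comp (quadraticChar F)).trans (quadraticChar_sum_zero hF)

theorem sum_quadraticChar_mul_self :
    ∑ w : F, quadraticChar F w * quadraticChar F w = Fintype.card F - 1 := by
  have h (w : F) : quadraticChar F w * quadraticChar F w = 1 - if w = 0 then 1 else 0 := by
    split_ifs with hw
    · simp [hw]
    · rw [← sq, quadraticChar_sq_one hw, sub_zero]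
  rw [sum_congr rfl fun w _ => h w, sum_sub_distrib, sum_ite_eq', if_pos (mem_univ 0), sum_const,
    card_univ, nsmul_one]

theorem sum_quadraticChar_mul_quadraticChar_one_sub (hF : ringChar F ≠ 2) :
    ∑ u : F, quadraticChar F u * quadraticChar F (1 - u) = -quadraticChar F (-1) := by
  have h := jacobiSum_nontrivial_inv (quadraticChar_ne_one hF)
  rwa [(quadraticChar_isQuadratic F).inv, jacobiSum] at h

theorem sum_quadraticChar_sub_mul_quadraticChar_sub (hF : ringChar F ≠ 2) (x y : F) :
    ∑ z, quadraticChar F (z - x) * quadraticChar F (z - y)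
      = if x = y then (Fintype.card F : ℤ) - 1 else -1 := by
  split_ifs with hxy
  · subst hxy
    exact ((Equiv.subRight x).sum_comp fun w => quadraticChar F w * quadraticChar F w).trans
      sum_quadraticChar_mul_self
  · set χ := quadraticChar F
    have hd : x - y ≠ 0 := sub_ne_zero.mpr hxy
    have hd2 : χ (x - y) * χ (x - y) = 1 := by rw [← sq, quadraticChar_sq_one hd]
    have hχ1 : χ (-1) * χ (-1) = 1 := by
      rw [← sq, quadraticChar_sq_one (neg_ne_zero.mpr one_ne_zero)]
    have he : Function.Bijective fun u => x - (x - y) * u :=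
      ((Equiv.mulLeft₀ (x - y) hd).trans (Equiv.subLeft x)).bijective
    calc ∑ z, χ (z - x) * χ (z - y)
        = ∑ u, χ (x - (x - y) * u - x) * χ (x - (x - y) * u - y) :=
          (Fintype.sum_bijective _ he _ _ fun _ => rfl).symm
      _ = ∑ u, χ (-1) * (χ u * χ (1 - u)) := by
          refine sum_congr rfl fun u _ => ?_
          rw [show x - (x - y) * u - x = -1 * (x - y) * u by ring,
            show x - (x - y) * u - y = (x - y) * (1 - u) by ring, map_mul, map_mul, map_mul]
          linear_combination χ (-1) * χ u * χ (1 - u) * hd2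
      _ = -1 := by
          rw [← mul_sum, sum_quadraticChar_mul_quadraticChar_one_sub hF]
          linear_combination -hχ1

namespace IsPaleyExtension

variable {T : Option F → Option F → Bool}

theorem isTournament (hP : IsPaleyExtension T) (hq : Fintype.card F % 4 = 3) :
    IsTournament T := by
  refine ⟨fun | none => hP.none_none | some x => hP.some_self x, fun i j hij => ?_⟩
  match i, j with
  | none, none => exact absurd rfl hij
  | none, some y => rw [hP.none_some, hP.some_none]; rfl
  | some x, none => rw [hP.none_some, hP.some_none]; rfl
  | some x, some y =>
    have hxy : x ≠ y := fun h => hij (congrArg some h)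
    have hyx := hP.some_some hxy.symm
    rw [← neg_sub, isSquare_neg_iff_of_card_mod_four hq (sub_ne_zero.mpr hxy.symm),
      ← hP.some_some hxy] at hyx
    cases hT : T (some x) (some y) <;> simp_all

theorem seidel_some_some (hP : IsPaleyExtension T) (hq : Fintype.card F % 4 = 3) (x y : F) :
    seidel T (some x) (some y) = quadraticChar F (y - x) := by
  obtain rfl | hxy := eq_or_ne x y
  · rw [seidel_apply_self, sub_self, MulChar.map_zero]
  have hne : y - x ≠ 0 := sub_ne_zero.mpr hxy.symm
  rw [(hP.isTournament hq).seidel_apply_of_ne ((Option.some_injective F).ne hxy)]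
  split_ifs with h
  · exact ((quadraticChar_one_iff_isSquare hne).mpr ((hP.some_some hxy).mp h)).symm
  · exact (quadraticChar_neg_one_iff_not_isSquare.mpr fun hs => h ((hP.some_some hxy).mpr hs)).symm

theorem seidel_mul_transpose (hP : IsPaleyExtension T) (hq : Fintype.card F % 4 = 3) :
    seidel T * (seidel T)ᵀ = (Fintype.card F : ℤ) • 1 := by
  have hF := ringChar_ne_two_of_card_mod_four hq
  ext (_ | x) (_ | y) <;>
    simp only [mul_apply, transpose_apply, Fintype.sum_option, seidel_apply_self,
      hP.seidel_none_some, hP.seidel_some_none, hP.seidel_some_some hq, Matrix.smul_apply,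
      one_apply, smul_eq_mul]
  · simp [card_univ]
  · simp [sum_quadraticChar_sub hF, -quadraticChar_apply]
  · simp [sum_quadraticChar_sub hF, -quadraticChar_apply]
  · rw [sum_quadraticChar_sub_mul_quadraticChar_sub hF]
    split_ifs <;> simp_all

end IsPaleyExtension

end Paley

/-- For a finite field `F` with `|F| = q ≡ 3 (mod 4)`, the tournament `T*(q)`
on `F ∪ {∞}` (where `x` dominates `y` iff `y − x` is a nonzero square, and `∞` dominates
everything) has a skew-conference Seidel matrix `S` (`S·Sᵀ = q·I`), and consequently
`δ = n²(n−1)(n−2)/96` with `n = q + 1`. -/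
theorem stmt_11 (F : Type*) [Field F] [Fintype F] [DecidableEq F]
    (hq : Fintype.card F % 4 = 3)
    (T : Option F → Option F → Bool)
    (hinf1 : ∀ x : F, T none (some x) = true)
    (hinf2 : ∀ x : F, T (some x) none = false)
    (hinf3 : T none none = false)
    (hdiag : ∀ x : F, T (some x) (some x) = false)
    (hsq : ∀ x y : F, x ≠ y → (T (some x) (some y) = true ↔ IsSquare (y - x))) :
    seidel T * (seidel T)ᵀ =
        (Fintype.card F : ℤ) • (1 : Matrix (Option F) (Option F) ℤ) ∧
      (numDiamonds T : ℚ) =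
        ((Fintype.card F : ℚ) + 1)^2 * (Fintype.card F : ℚ) * ((Fintype.card F : ℚ) - 1)
          / 96 := by
  have hP : IsPaleyExtension T := ⟨hinf1, hinf2, hinf3, hdiag, hsq _ _⟩
  have hT := hP.isTournament hq
  have hS := hP.seidel_mul_transpose hq
  have hS' : seidel T * (seidel T)ᵀ = ((Fintype.card (Option F) : ℤ) - 1) • 1 := by
    rw [hS, Fintype.card_option, Nat.cast_succ, add_sub_cancel_right]
  have h24 := hT.twentyFour_mul_numC3 hS'
  have h4 := congrArg (Nat.cast : ℕ → ℚ) (hT.four_mul_numDiamonds hS')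
  push_cast [Fintype.card_option] at h24 h4
  refine ⟨hS, ?_⟩
  rw [eq_div_iff (by norm_num)]
  linear_combination 24 * h4 + ((Fintype.card F : ℚ) + 1) * h24
end
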